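/- arXiv:2312.11203 — 2 statements merged into one kernel-verified Lean document; each statement's English description precedes it below -/
import Mathlib

section
/- In the setting of CTXA, with π_n = ∏_{k=1}^{n} (1 − 2c(k)/l(k)) and λ = lim_{n→∞} π_n, assume additionally that for every positive integer k there exist n, n' ∈ ℤ_{>0} such that k divides r(n) and k divides r'(n'). If (x, y) ∈ ℚ × ℚ satisfies x > λ|y|, then there exist n ≥ 0 and nonnegative integers m_1, m_2 such that γ_n(m_1, m_2) = (x, y). -/
/-!
Choose `n` so large that the denominators of `x` and `y` divide `r(n)` and `r'(n)` and
`π_n |y| < x`. Since `π_n r(n) = r'(n)`, the integers `a = r(n) x` and `b = r'(n) y` then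
satisfy `|b| ≤ a`, so `m₁ = a + b` and `m₂ = a - b` are nonnegative and `γ_n(m₁, m₂) = (x, y)`.
-/

open Filter

theorem Rat.exists_int_eq_mul_of_den_dvd {q : ℚ} {m : ℕ} (h : q.den ∣ m) :
    ∃ z : ℤ, (m : ℚ) * q = z := by
  obtain ⟨t, rfl⟩ := h
  exact ⟨t * q.num, by push_cast; rw [← q.mul_den_eq_num]; ring⟩

theorem Finset.prod_Icc_one_dvd_prod_Icc_one {M : Type*} [CommMonoid M] (f : ℕ → M)
    {m n : ℕ} (hmn : m ≤ n) : ∏ k ∈ Icc 1 m, f k ∣ ∏ k ∈ Icc 1 n, f k :=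
  prod_dvd_prod_of_subset _ _ _ (Icc_subset_Icc le_rfl hmn)

theorem Finset.eventually_dvd_prod_Icc_one {M : Type*} [CommMonoid M] (f : ℕ → M) {a : M}
    {n₀ : ℕ} (h : a ∣ ∏ k ∈ Icc 1 n₀, f k) : ∀ᶠ n in atTop, a ∣ ∏ k ∈ Icc 1 n, f k :=
  eventually_atTop.2 ⟨n₀, fun _ hn => h.trans (prod_Icc_one_dvd_prod_Icc_one f hn)⟩

theorem Finset.prod_one_sub_div_mul_prod {ι K : Type*} [Field K] (s : Finset ι) (a b : ι → K)
    (hb : ∀ i ∈ s, b i ≠ 0) :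
    (∏ i ∈ s, (1 - a i / b i)) * ∏ i ∈ s, b i = ∏ i ∈ s, (b i - a i) := by
  rw [← prod_mul_distrib]
  exact prod_congr rfl fun i hi => by field_simp [hb i hi]

theorem exists_nat_add_div_eq_and_sub_div_eq {x y : ℚ} {R R' : ℕ} (hR : R ≠ 0) (hR' : R' ≠ 0)
    (hx : x.den ∣ R) (hy : y.den ∣ R') (hxy : R' * |y| ≤ R * x) :
    ∃ m₁ m₂ : ℕ, ((m₁ : ℚ) + m₂) / (2 * R) = x ∧ ((m₁ : ℚ) - m₂) / (2 * R') = y := by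
  obtain ⟨a, ha⟩ := Rat.exists_int_eq_mul_of_den_dvd hx
  obtain ⟨b, hb⟩ := Rat.exists_int_eq_mul_of_den_dvd hy
  have hba : |b| ≤ a := by
    have : |(b : ℚ)| ≤ a := by
      rwa [← ha, ← hb, abs_mul, Nat.abs_cast]
    exact_mod_cast this
  obtain ⟨m₁, hm₁⟩ := Int.eq_ofNat_of_zero_le (by linarith [neg_abs_le b] : 0 ≤ a + b)
  obtain ⟨m₂, hm₂⟩ := Int.eq_ofNat_of_zero_le (by linarith [le_abs_self b] : 0 ≤ a - b)
  have e₁ : (m₁ : ℚ) = a + b := by exact_mod_cast hm₁.symm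
  have e₂ : (m₂ : ℚ) = a - b := by exact_mod_cast hm₂.symm
  refine ⟨m₁, m₂, ?_, ?_⟩
  · rw [e₁, e₂, ← ha]; field_simp; ring
  · rw [e₁, e₂, ← hb]; field_simp; ring

theorem stmt_7_general (l c : ℕ → ℕ)
    (hl : ∀ n, 1 ≤ n → 2 * c n + 1 ≤ l n)
    (r r' : ℕ → ℕ)
    (hr : ∀ n, r n = ∏ k ∈ Finset.Icc 1 n, l k)
    (hr' : ∀ n, r' n = ∏ k ∈ Finset.Icc 1 n, (l k - 2 * c k))
    (γ : ℕ → ℤ × ℤ → ℚ × ℚ)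
    (hγ : ∀ n M, γ n M = (((M.1 : ℚ) + (M.2 : ℚ)) / (2 * (r n : ℚ)),
                          ((M.1 : ℚ) - (M.2 : ℚ)) / (2 * (r' n : ℚ))))
    (π : ℕ → ℝ)
    (hπ : ∀ n, π n = ∏ k ∈ Finset.Icc 1 n, (1 - 2 * (c k : ℝ) / (l k : ℝ)))
    (lam : ℝ) (hlam : Tendsto π atTop (nhds lam))
    (hdiv : ∀ k : ℕ, 0 < k → ∃ n n' : ℕ, 0 < n ∧ 0 < n' ∧ k ∣ r n ∧ k ∣ r' n')
    (x y : ℚ) (hxy : (x : ℝ) > lam * |(y : ℝ)|) :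
    ∃ (n : ℕ) (m₁ m₂ : ℕ), γ n ((m₁ : ℤ), (m₂ : ℤ)) = (x, y) := by
  have hcl : ∀ n, ∀ k ∈ Finset.Icc 1 n, 2 * c k < l k := fun _ k hk =>
    hl k (Finset.mem_Icc.1 hk).1
  have hr_ne : ∀ n, r n ≠ 0 := fun n => hr n ▸
    Finset.prod_ne_zero_iff.2 fun k hk => by have := hcl n k hk; omega
  have hr'_ne : ∀ n, r' n ≠ 0 := fun n => hr' n ▸
    Finset.prod_ne_zero_iff.2 fun k hk => by have := hcl n k hk; omega
  have hπr : ∀ n, π n * r n = r' n := fun n => by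
    rw [hπ, hr, hr', Nat.cast_prod, Nat.cast_prod, Finset.prod_one_sub_div_mul_prod]
    · exact Finset.prod_congr rfl fun k hk => by push_cast [(hcl n k hk).le]; ring
    · exact fun k hk => Nat.cast_ne_zero.2 (by have := hcl n k hk; omega)
  obtain ⟨n₁, -, -, -, hx, -⟩ := hdiv x.den x.den_pos
  obtain ⟨-, n₂, -, -, -, hy⟩ := hdiv y.den y.den_pos
  rw [hr] at hx
  rw [hr'] at hy
  obtain ⟨n, hxn, hyn, hπn⟩ := ((Finset.eventually_dvd_prod_Icc_one _ hx).and
    ((Finset.eventually_dvd_prod_Icc_one _ hy).and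
      ((hlam.mul_const |(y : ℝ)|).eventually_lt_const hxy))).exists
  have hle : (r' n : ℝ) * |(y : ℝ)| ≤ r n * x := by
    rw [← hπr, mul_comm (π n), mul_assoc]
    exact mul_le_mul_of_nonneg_left hπn.le (Nat.cast_nonneg _)
  obtain ⟨m₁, m₂, h₁, h₂⟩ := exists_nat_add_div_eq_and_sub_div_eq (hr_ne n) (hr'_ne n)
    (hr n ▸ hxn) (hr' n ▸ hyn) (by exact_mod_cast hle)
  exact ⟨n, m₁, m₂, by rw [hγ]; push_cast; rw [h₁, h₂]⟩

/-- setting CTXA: with `λ = lim_N ∏_{k=1}^N (1 − 2c(k)/l(k))`, under the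
divisibility assumption on `r` and `r'`, every `(x, y) ∈ ℚ × ℚ` with `x > λ|y|` is
`γ_n(m₁, m₂)` for some `n` and some nonnegative integers `m₁, m₂`. -/
theorem stmt_7 (l c : ℕ → ℕ) (hc : ∀ n, 1 ≤ n → 1 ≤ c n)
    (hl : ∀ n, 1 ≤ n → 2 * c n + 1 ≤ l n)
    (r r' : ℕ → ℕ)
    (hr : ∀ n, r n = ∏ k ∈ Finset.Icc 1 n, l k)
    (hr' : ∀ n, r' n = ∏ k ∈ Finset.Icc 1 n, (l k - 2 * c k))
    (γ : ℕ → ℤ × ℤ → ℚ × ℚ)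
    (hγ : ∀ n M, γ n M = (((M.1 : ℚ) + (M.2 : ℚ)) / (2 * (r n : ℚ)),
                          ((M.1 : ℚ) - (M.2 : ℚ)) / (2 * (r' n : ℚ))))
    (π : ℕ → ℝ)
    (hπ : ∀ n, π n = ∏ k ∈ Finset.Icc 1 n, (1 - 2 * (c k : ℝ) / (l k : ℝ)))
    (lam : ℝ) (hlam : Tendsto π atTop (nhds lam))
    (hdiv : ∀ k : ℕ, 0 < k → ∃ n n' : ℕ, 0 < n ∧ 0 < n' ∧ k ∣ r n ∧ k ∣ r' n')
    (x y : ℚ) (hxy : (x : ℝ) > lam * |(y : ℝ)|) :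
    ∃ (n : ℕ) (m₁ m₂ : ℕ), γ n ((m₁ : ℤ), (m₂ : ℤ)) = (x, y) :=
  stmt_7_general l c hl r r' hr hr' γ hγ π hπ lam hlam hdiv x y hxy
end

section
/- In the setting of CTXC: let b, d ∈ ℚ with b ≥ 0 and d ≥ 1, and define Q : ℚ × ℚ → ℚ × ℚ by Q(x, y) = (x + b y, d y). If Q maps the cone C_λ into itself, then b = 0 and d = 1. -/
/-!
Apply the map to the points `(q, 1)` and `(q, -1)` of the cone, for rationals `q > λ`: the
images lie off the `x`-axis, so `q ± b > λ d`. Letting `q` decrease to `λ` gives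
`λ d + |b| ≤ λ`, which for `d ≥ 1` and `λ > 0` leaves only `b = 0`, `d = 1`.
-/

def ratCone (lam : ℝ) : Set (ℚ × ℚ) :=
  {z | z = (0, 0) ∨ lam * |(z.2 : ℝ)| < z.1}

section ratCone

variable {lam : ℝ} {b d : ℚ}

lemma mk_mem_ratCone {x y : ℚ} (h : lam * |(y : ℝ)| < x) : (x, y) ∈ ratCone lam :=
  Or.inr h

lemma lt_of_mem_ratCone {z : ℚ × ℚ} (hz : z ∈ ratCone lam) (h2 : z.2 ≠ 0) :
    lam * |(z.2 : ℝ)| < z.1 :=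
  hz.resolve_left fun h => h2 (congrArg Prod.snd h)

lemma mul_abs_sub_le_of_shear_mapsTo
    (hmaps : ∀ z ∈ ratCone lam, (z.1 + b * z.2, d * z.2) ∈ ratCone lam)
    (hd : d ≠ 0) {y : ℚ} (hy : |y| = 1) :
    lam * |(d : ℝ)| - b * y ≤ lam := by
  have hyR : |(y : ℝ)| = 1 := by exact_mod_cast hy
  have hy0 : y ≠ 0 := by rintro rfl; simp at hy
  refine le_of_forall_lt_rat_imp_le fun q hq => ?_
  have himage := hmaps (q, y) (mk_mem_ratCone (by rwa [hyR, mul_one]))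
  have hlt := lt_of_mem_ratCone himage (mul_ne_zero hd hy0)
  push_cast at hlt
  rw [abs_mul, hyR, mul_one] at hlt
  linarith

lemma mul_abs_add_abs_le_of_shear_mapsTo
    (hmaps : ∀ z ∈ ratCone lam, (z.1 + b * z.2, d * z.2) ∈ ratCone lam) (hd : d ≠ 0) :
    lam * |(d : ℝ)| + |(b : ℝ)| ≤ lam := by
  have hplus := mul_abs_sub_le_of_shear_mapsTo hmaps hd (y := 1) abs_one
  have hminus := mul_abs_sub_le_of_shear_mapsTo hmaps hd (y := -1) (by simp)
  push_cast at hplus hminus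
  cases abs_cases (b : ℝ) <;> linarith

end ratCone

theorem stmt_10_general (lam : ℝ) (hlam : 0 < lam)
    (C : Set (ℚ × ℚ))
    (hC : C = {z : ℚ × ℚ | z = (0, 0) ∨ (z.1 : ℝ) > lam * |(z.2 : ℝ)|})
    (b d : ℚ) (hd : 1 ≤ d)
    (Q : ℚ × ℚ → ℚ × ℚ) (hQ : ∀ z : ℚ × ℚ, Q z = (z.1 + b * z.2, d * z.2))
    (hcone : ∀ z ∈ C, Q z ∈ C) :
    b = 0 ∧ d = 1 := by
  subst hC
  have hmaps : ∀ z ∈ ratCone lam, (z.1 + b * z.2, d * z.2) ∈ ratCone lam :=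
    fun z hz => hQ z ▸ hcone z hz
  have hdR : (1 : ℝ) ≤ d := by exact_mod_cast hd
  have hbound := mul_abs_add_abs_le_of_shear_mapsTo hmaps (by positivity)
  rw [abs_of_pos (by linarith)] at hbound
  have hlam_le : lam ≤ lam * d := le_mul_of_one_le_right hlam.le hdR
  have hb : |(b : ℝ)| ≤ 0 := by linarith
  have hd1 : (d : ℝ) ≤ 1 := le_of_mul_le_mul_left (by linarith [abs_nonneg (b : ℝ)]) hlam
  exact ⟨by exact_mod_cast abs_nonpos_iff.mp hb, by exact_mod_cast le_antisymm hd1 hdR⟩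

/-- setting CTXC: if `b, d ∈ ℚ` satisfy `b ≥ 0` and `d ≥ 1`, and
`Q(x, y) = (x + b y, d y)` maps the cone `C_λ` into itself, then `b = 0` and `d = 1`. -/
theorem stmt_10 (lam : ℝ) (hlam : 0 < lam)
    (C : Set (ℚ × ℚ))
    (hC : C = {z : ℚ × ℚ | z = (0, 0) ∨ (z.1 : ℝ) > lam * |(z.2 : ℝ)|})
    (b d : ℚ) (hb : 0 ≤ b) (hd : 1 ≤ d)
    (Q : ℚ × ℚ → ℚ × ℚ) (hQ : ∀ z : ℚ × ℚ, Q z = (z.1 + b * z.2, d * z.2))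
    (hcone : ∀ z ∈ C, Q z ∈ C) :
    b = 0 ∧ d = 1 :=
  stmt_10_general lam hlam C hC b d hd Q hQ hcone
end
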